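/- Let E(M) denote the set of ends of a non-compact connected manifold M with its natural topology. If M is a properly embedded minimal surface in ℝ³ with more than one end such that every limit end is a top or bottom end in a linear order on E(M), then E(M) has at most two accumulation points, and a compact, totally disconnected, linearly ordered topological space with at most two accumulation points is countable. -/
import Mathlib

section Aux

variable {X : Type*} [TopologicalSpace X] [LinearOrder X] [OrderTopology X]
    [CompactSpace X]

/-- Any point which is neither top nor bot is isolated. -/
lemma aux_isolated (h : ∀ x : X, ¬ IsOpen ({x} : Set X) → IsTop x ∨ IsBot x)
    (x : X) (hx : ¬ IsTop x) (hx' : ¬ IsBot x) : IsOpen ({x} : Set X) := by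
  by_contra hc
  rcases h x hc with h1 | h1
  · exact hx h1
  · exact hx' h1

/-- Any closed interval whose left end is not bot and right end is not top is finite. -/
lemma aux_icc_finite (h : ∀ x : X, ¬ IsOpen ({x} : Set X) → IsTop x ∨ IsBot x)
    (a b : X) (ha : ¬ IsBot a) (hb : ¬ IsTop b) : (Set.Icc a b).Finite := by
  have hcpt : IsCompact (Set.Icc a b) := isClosed_Icc.isCompact
  -- every point of Icc a b is isolated in X
  have hiso : ∀ x ∈ Set.Icc a b, IsOpen ({x} : Set X) := by
    intro x hx
    apply aux_isolated h
    · intro htop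
      exact hb (fun y => le_trans (htop y) hx.2)
    · intro hbot
      exact ha (fun y => le_trans hx.1 (hbot y))
  -- cover by singletons of points of the interval
  rcases hcpt.elim_finite_subcover (fun x : Set.Icc a b => ({(x : X)} : Set X))
      (fun x => hiso x x.2)
      (fun x hx => Set.mem_iUnion.2 ⟨⟨x, hx⟩, rfl⟩) with ⟨t, ht⟩
  exact Set.Finite.subset (t.finite_toSet.biUnion (fun i _ => Set.finite_singleton (i : X)))
    (by simpa using ht)

end Aux

/- The space of ends E(M) of a PEMS with more than one end is a compact,
   Hausdorff, totally disconnected, linearly ordered topological space. If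
   every limit end (non-isolated point) is a top or bottom end of the linear
   order, then there are at most two accumulation points and the space is
   countable. -/

theorem ends_with_limit_ends_top_or_bottom_countable
    (X : Type*) [TopologicalSpace X] [LinearOrder X] [OrderTopology X]
    [CompactSpace X] [T2Space X] [TotallyDisconnectedSpace X]
    (h : ∀ x : X, ¬ IsOpen ({x} : Set X) → IsTop x ∨ IsBot x) :
    {x : X | ¬ IsOpen ({x} : Set X)}.ncard ≤ 2 ∧ Countable X := by
  set T : Set X := {x | IsTop x} with hT
  set B : Set X := {x | IsBot x} with hB
  have hTsub : T.Subsingleton := fun x hx y hy => le_antisymm (hy x) (hx y)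
  have hBsub : B.Subsingleton := fun x hx y hy => le_antisymm (hx y) (hy x)
  have hsub : {x : X | ¬ IsOpen ({x} : Set X)} ⊆ T ∪ B := fun x hx => h x hx
  constructor
  · calc {x : X | ¬ IsOpen ({x} : Set X)}.ncard
        ≤ (T ∪ B).ncard := Set.ncard_le_ncard hsub (hTsub.finite.union hBsub.finite)
      _ ≤ T.ncard + B.ncard := Set.ncard_union_le T B
      _ ≤ 1 + 1 := add_le_add ((Set.ncard_le_one hTsub.finite).2 hTsub)
          ((Set.ncard_le_one hBsub.finite).2 hBsub)
      _ = 2 := rfl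
  · -- countability
    set S : Set X := {x | ¬ IsTop x ∧ ¬ IsBot x} with hS
    have hScount : S.Countable := by
      rcases S.eq_empty_or_nonempty with hSe | ⟨x0, hx0⟩
      · simp [hSe]
      · -- map into ℤ via interval cardinalities
        set g : X → ℤ := fun y =>
          if x0 ≤ y then ((Set.Icc x0 y).ncard : ℤ) else -((Set.Icc y x0).ncard : ℤ)
          with hg
        have hmono : Set.InjOn g S := by
          have key : ∀ y ∈ S, ∀ z ∈ S, y < z → g y < g z := by
            intro y hy z hz hyz
            by_cases h1 : x0 ≤ y
            · have h2 : x0 ≤ z := h1.trans hyz.le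
              have hfin : (Set.Icc x0 z).Finite := aux_icc_finite h x0 z hx0.2 hz.1
              have hss : Set.Icc x0 y ⊂ Set.Icc x0 z := by
                constructor
                · exact Set.Icc_subset_Icc_right hyz.le
                · intro hcon
                  exact absurd (hcon ⟨h2, le_refl z⟩).2 (not_le.2 hyz)
              simp only [hg, if_pos h1, if_pos h2]
              exact_mod_cast Set.ncard_lt_ncard hss hfin
            · by_cases h2 : x0 ≤ z
              · have hfin1 : (Set.Icc y x0).Finite := aux_icc_finite h y x0 hy.2 hx0.1
                have hfin2 : (Set.Icc x0 z).Finite := aux_icc_finite h x0 z hx0.2 hz.1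
                have hp1 : 0 < (Set.Icc y x0).ncard :=
                  Set.ncard_pos hfin1 |>.2 ⟨x0, le_of_not_ge h1, le_refl x0⟩
                have hp2 : 0 < (Set.Icc x0 z).ncard :=
                  Set.ncard_pos hfin2 |>.2 ⟨x0, le_refl x0, h2⟩
                simp only [hg, if_neg h1, if_pos h2]
                have : (0:ℤ) < (Set.Icc x0 z).ncard := by exact_mod_cast hp2
                have : -((Set.Icc y x0).ncard : ℤ) < 0 := by
                  simpa using (show (0:ℤ) < (Set.Icc y x0).ncard by exact_mod_cast hp1)
                omega
              · have hfin : (Set.Icc y x0).Finite := aux_icc_finite h y x0 hy.2 hx0.1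
                have hss : Set.Icc z x0 ⊂ Set.Icc y x0 := by
                  constructor
                  · exact Set.Icc_subset_Icc_left hyz.le
                  · intro hcon
                    exact absurd (hcon ⟨le_refl y, le_of_not_ge h1⟩).1 (not_le.2 hyz)
                simp only [hg, if_neg h1, if_neg h2]
                have := Set.ncard_lt_ncard hss hfin
                omega
          intro y hy z hz hgyz
          rcases lt_trichotomy y z with hlt | heq | hlt
          · exact absurd hgyz (ne_of_lt (key y hy z hz hlt))
          · exact heq
          · exact absurd hgyz.symm (ne_of_lt (key z hz y hy hlt))
        have : Countable S := by
          have : Function.Injective (fun y : S => g y) := fun a b hab =>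
            Subtype.ext (hmono a.2 b.2 hab)
          exact this.countable
        exact Set.countable_coe_iff.2 this
    have huniv : (Set.univ : Set X) ⊆ S ∪ (T ∪ B) := by
      intro x _
      by_cases h1 : IsTop x
      · exact Or.inr (Or.inl h1)
      by_cases h2 : IsBot x
      · exact Or.inr (Or.inr h2)
      exact Or.inl ⟨h1, h2⟩
    have : (Set.univ : Set X).Countable :=
      Set.Countable.mono huniv
        (hScount.union (hTsub.countable.union hBsub.countable))
    exact Set.countable_univ_iff.1 this
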